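/- arXiv:1907.02404 — 5 statements merged into one kernel-verified Lean document; each statement's English description precedes it below -/
import Mathlib

section
/- Let V = W# H# where V ∈ ℝ^{F×N} has rank(V) = K, W# ∈ ℝ^{F×K} is entrywise nonnegative with each column summing to one (i.e., eᵀW# = eᵀ), and H# ∈ ℝ^{K×N} is entrywise nonnegative and satisfies the sufficiently scattered condition. Then every optimal solution (Ŵ, Ĥ) of the problem: minimize logdet(ŴᵀŴ) over Ŵ ∈ ℝ^{F×K}, Ĥ ∈ ℝ^{K×N} subject to V = ŴĤ, Ŵᵀe = e, and Ĥ ≥ 0, satisfies Ŵ = W#Π and Ĥ = ΠᵀH# for some K×K permutation matrix Π; that is, the model recovers (W#, H#) up to permutation of the rank-one factors. -/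
open Matrix

/-- The conic hull of the columns of a matrix `H`. -/
def coneH {K N : ℕ} (H : Matrix (Fin K) (Fin N) ℝ) : Set (Fin K → ℝ) :=
  {x | ∃ θ : Fin N → ℝ, (∀ n, 0 ≤ θ n) ∧ x = H.mulVec θ}

/-- The dual cone of a set `C ⊆ ℝ^K`. -/
def dualCone {K : ℕ} (C : Set (Fin K → ℝ)) : Set (Fin K → ℝ) :=
  {y | ∀ x ∈ C, 0 ≤ ∑ i, x i * y i}

/-- The second-order cone `𝒞 = {x : xᵀe ≥ √(K−1)·‖x‖₂}`. -/
def secondOrderCone (K : ℕ) : Set (Fin K → ℝ) :=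
  {x | Real.sqrt (K - 1) * Real.sqrt (∑ i, (x i) ^ 2) ≤ ∑ i, x i}

/-- The dual of the second-order cone: `𝒞* = {x : xᵀe ≥ ‖x‖₂}`. -/
def secondOrderConeDual (K : ℕ) : Set (Fin K → ℝ) :=
  {x | Real.sqrt (∑ i, (x i) ^ 2) ≤ ∑ i, x i}

/-- The sufficiently scattered condition for a nonnegative matrix `H ∈ ℝ₊^{K×N}`:
(1) `𝒞 ⊆ cone(H)`, and
(2) `cone(H)* ∩ bd(𝒞*) = {λ e_k : λ ≥ 0, k = 1,…,K}`. -/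
def SufficientlyScattered {K N : ℕ} (H : Matrix (Fin K) (Fin N) ℝ) : Prop :=
  secondOrderCone K ⊆ coneH H ∧
  dualCone (coneH H) ∩ frontier (secondOrderConeDual K) =
    {x | ∃ (k : Fin K) (lam : ℝ), 0 ≤ lam ∧ x = fun i => lam * (if i = k then (1 : ℝ) else 0)}

/-!
Both factorizations have inner rank `K`, so `W# = Ŵ B` and `Ĥ = B H#` for a square `B` whose
columns sum to one. Since `Ĥ ≥ 0`, every row `b_k` of `B` lies in `cone(H#)*`, which the first
scattering condition puts inside `𝒞*`: `‖b_k‖ ≤ eᵀ b_k`. Optimality of `Ŵ` gives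
`det(ŴᵀŴ) ≤ det(W#ᵀW#) = det(B)² det(ŴᵀŴ)`, so `|det B| ≥ 1`, whereas Hadamard's inequality and
AM–GM give `|det B| ≤ ∏ ‖b_k‖ ≤ ∏ eᵀ b_k ≤ 1` because `∑ₖ eᵀ b_k = K`. Hence every row lies on
`bd(𝒞*)`, so by the second scattering condition it is a multiple of a unit vector; with unit column
sums, `B` is a permutation matrix.
-/

theorem Real.prod_le_one_of_sum_eq_card {ι : Type*} [Fintype ι] {s : ι → ℝ}
    (h0 : ∀ i, 0 ≤ s i) (hsum : ∑ i, s i = Fintype.card ι) : ∏ i, s i ≤ 1 := by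
  rcases isEmpty_or_nonempty ι with hι | hι
  · simp
  have hn : (0 : ℝ) < Fintype.card ι := by exact_mod_cast Fintype.card_pos
  have amgm := Real.geom_mean_le_arith_mean_weighted Finset.univ
    (fun _ => (Fintype.card ι : ℝ)⁻¹) s (fun _ _ => by positivity) (by simp [hn.ne'])
    (fun i _ => h0 i)
  rw [Real.finsetProd_rpow _ _ (fun i _ => h0 i), ← Finset.mul_sum, hsum,
    inv_mul_cancel₀ hn.ne'] at amgm
  have hprod : 0 ≤ ∏ i, s i := Finset.prod_nonneg fun i _ => h0 i
  calc ∏ i, s i = ((∏ i, s i) ^ (Fintype.card ι : ℝ)⁻¹) ^ Fintype.card ι :=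
        (Real.rpow_inv_natCast_pow hprod Fintype.card_ne_zero).symm
    _ ≤ 1 := pow_le_one₀ (Real.rpow_nonneg hprod _) amgm

namespace Matrix

variable {l m n R : Type*}

theorem isUnit_of_rank_eq_card [Fintype n] [DecidableEq n] [Field R] {A : Matrix n n R}
    (h : A.rank = Fintype.card n) : IsUnit A :=
  mulVec_surjective_iff_isUnit.1 <| LinearMap.range_eq_top.1 <|
    Submodule.eq_top_of_finrank_eq (h.trans (Module.finrank_fintype_fun_eq_card R).symm)

section OrderedField

variable [Fintype m] [Fintype n] [Field R] [LinearOrder R] [IsStrictOrderedRing R]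

theorem isUnit_transpose_mul_self [DecidableEq n] {A : Matrix m n R}
    (h : A.rank = Fintype.card n) : IsUnit (Aᵀ * A) :=
  isUnit_of_rank_eq_card (by rw [rank_transpose_mul_self, h])

theorem exists_mul_eq_one_of_rank_eq_card_width [DecidableEq n] {A : Matrix m n R}
    (h : A.rank = Fintype.card n) : ∃ L : Matrix n m R, L * A = 1 :=
  ⟨(Aᵀ * A)⁻¹ * Aᵀ, by
    rw [Matrix.mul_assoc,
      nonsing_inv_mul _ ((isUnit_iff_isUnit_det _).1 (isUnit_transpose_mul_self h))]⟩

theorem exists_mul_eq_one_of_rank_eq_card_height [DecidableEq m] {A : Matrix m n R}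
    (h : A.rank = Fintype.card m) : ∃ R' : Matrix n m R, A * R' = 1 := by
  obtain ⟨L, hL⟩ := exists_mul_eq_one_of_rank_eq_card_width (A := Aᵀ) (by rwa [rank_transpose])
  exact ⟨Lᵀ, by rw [← transpose_transpose A, ← transpose_mul, hL, transpose_one]⟩

theorem exists_eq_mul_of_mul_eq [Fintype l] [DecidableEq l] {W W' : Matrix m l R}
    {H H' : Matrix l n R} (hW' : W'.rank = Fintype.card l) (hH : H.rank = Fintype.card l)
    (h : W * H = W' * H') : ∃ B : Matrix l l R, W = W' * B ∧ H' = B * H := by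
  obtain ⟨L, hL⟩ := exists_mul_eq_one_of_rank_eq_card_width hW'
  obtain ⟨R', hR'⟩ := exists_mul_eq_one_of_rank_eq_card_height hH
  have hW : W = W' * (H' * R') := by
    rw [← Matrix.mul_assoc, ← h, Matrix.mul_assoc, hR', Matrix.mul_one]
  refine ⟨H' * R', hW, ?_⟩
  calc H' = L * (W' * H') := by rw [← Matrix.mul_assoc, hL, Matrix.one_mul]
    _ = H' * R' * H := by
      rw [← h, hW, Matrix.mul_assoc, Matrix.mul_assoc, ← Matrix.mul_assoc L, hL, Matrix.one_mul]

end OrderedField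

theorem rank_eq_card_of_rank_mul_eq_card [Fintype l] [Fintype n] [Field R] {A : Matrix m l R}
    {B : Matrix l n R} (h : (A * B).rank = Fintype.card l) :
    A.rank = Fintype.card l ∧ B.rank = Fintype.card l :=
  ⟨le_antisymm A.rank_le_card_width (h ▸ rank_mul_le_left A B),
    le_antisymm B.rank_le_card_height (h ▸ rank_mul_le_right A B)⟩

theorem det_transpose_mul_self_pos [Fintype m] [Fintype n] [DecidableEq n] {A : Matrix m n ℝ}
    (h : A.rank = Fintype.card n) : 0 < (Aᵀ * A).det :=
  lt_of_le_of_ne (posSemidef_conjTranspose_mul_self A).det_nonneg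
    ((isUnit_iff_isUnit_det _).1 (isUnit_transpose_mul_self h)).ne_zero.symm

theorem one_le_abs_det_of_det_gram_le [Fintype m] [Fintype n] [DecidableEq n]
    {W : Matrix m n ℝ} {B : Matrix n n ℝ} (hW : 0 < (Wᵀ * W).det)
    (h : (Wᵀ * W).det ≤ ((W * B)ᵀ * (W * B)).det) : 1 ≤ |B.det| := by
  rw [transpose_mul, Matrix.mul_assoc, ← Matrix.mul_assoc Wᵀ, det_mul, det_mul,
    det_transpose] at h
  rw [← one_le_sq_iff_one_le_abs]
  nlinarith

theorem sum_apply_eq_one_of_mul [Fintype l] [Fintype m] [NonAssocSemiring R]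
    {A : Matrix m l R} {B : Matrix l n R} (hA : ∀ j, ∑ i, A i j = 1)
    (hAB : ∀ k, ∑ i, (A * B) i k = 1) (k : n) : ∑ j, B j k = 1 := by
  rw [← hAB k]
  simp only [mul_apply, Finset.sum_comm (γ := m), ← Finset.sum_mul, hA, one_mul]

theorem exists_perm_eq_toMatrix_of_forall_row_eq_single [Fintype n] [DecidableEq n]
    [NonAssocSemiring R] [Nontrivial R] {B : Matrix n n R}
    (hrow : ∀ k, ∃ j c, B k = Pi.single j c) (hcol : ∀ i, ∑ k, B k i = 1) :
    ∃ σ : Equiv.Perm n, B = σ.toPEquiv.toMatrix := by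
  choose j c hB using hrow
  have hj : Function.Surjective j := by
    intro i
    by_contra! hi
    simpa [hB, Pi.single_apply, hi] using hcol i
  have hj' : Function.Injective j := Finite.injective_iff_surjective.2 hj
  have hc : ∀ k, c k = 1 := fun k => by
    simpa [hB, Pi.single_apply, hj'.eq_iff] using hcol (j k)
  refine ⟨Equiv.ofBijective j ⟨hj', hj⟩, ?_⟩
  ext k i
  simp only [hB, hc, Pi.single_apply, PEquiv.toMatrix_apply, Equiv.toPEquiv_apply,
    Option.mem_def, Option.some.injEq]
  exact if_congr eq_comm rfl rfl

variable {K : ℕ}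

theorem abs_det_le_prod_sqrt_sum_sq (B : Matrix (Fin K) (Fin K) ℝ) :
    |B.det| ≤ ∏ k, √(∑ i, B k i ^ 2) := by
  let e := EuclideanSpace.basisFun (Fin K) ℝ
  have : Fact (Module.finrank ℝ (EuclideanSpace ℝ (Fin K)) = K) := ⟨finrank_euclideanSpace_fin⟩
  have hvol := e.toBasis.orientation.abs_volumeForm_apply_le (fun k => WithLp.toLp 2 (B k))
  rw [e.toBasis.orientation.volumeForm_robust e rfl, Module.Basis.det_apply] at hvol
  convert hvol using 2
  · rw [← det_transpose]
    congr 1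
  · simp [EuclideanSpace.norm_eq]

theorem sqrt_sum_sq_eq_sum_of_one_le_abs_det {B : Matrix (Fin K) (Fin K) ℝ}
    (hcol : ∀ i, ∑ k, B k i = 1) (hrow : ∀ k, √(∑ i, B k i ^ 2) ≤ ∑ i, B k i)
    (hdet : 1 ≤ |B.det|) (k : Fin K) : √(∑ i, B k i ^ 2) = ∑ i, B k i := by
  have hsum : ∑ k, ∑ i, B k i = Fintype.card (Fin K) :=
    Finset.sum_comm.trans (by simp [hcol])
  have hsums : ∏ k, ∑ i, B k i ≤ 1 :=
    Real.prod_le_one_of_sum_eq_card (fun k => (Real.sqrt_nonneg _).trans (hrow k)) hsum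
  have hnorms : 1 ≤ ∏ k, √(∑ i, B k i ^ 2) := hdet.trans (abs_det_le_prod_sqrt_sum_sq B)
  have hpos : ∀ k, 0 < √(∑ i, B k i ^ 2) := fun k =>
    (Real.sqrt_nonneg _).lt_of_ne fun h0 => by
      rw [Finset.prod_eq_zero (Finset.mem_univ k) h0.symm] at hnorms
      linarith
  by_contra hne
  have := Finset.prod_lt_prod (fun k _ => hpos k) (fun k _ => hrow k)
    ⟨k, Finset.mem_univ k, (hrow k).lt_of_ne hne⟩
  linarith

end Matrix

section Cones

variable {K N : ℕ}

theorem mem_secondOrderCone_iff {x : Fin K → ℝ} :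
    x ∈ secondOrderCone K ↔ 0 ≤ ∑ i, x i ∧ (K - 1) * ∑ i, x i ^ 2 ≤ (∑ i, x i) ^ 2 := by
  rw [secondOrderCone, Set.mem_ofPred_eq,
    ← Real.sqrt_mul' _ (Finset.sum_nonneg fun i _ => sq_nonneg (x i)), Real.sqrt_le_iff]

theorem mem_secondOrderConeDual_iff {x : Fin K → ℝ} :
    x ∈ secondOrderConeDual K ↔ 0 ≤ ∑ i, x i ∧ ∑ i, x i ^ 2 ≤ (∑ i, x i) ^ 2 := by
  rw [secondOrderConeDual, Set.mem_ofPred_eq, Real.sqrt_le_iff]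

theorem dualCone_secondOrderCone_subset :
    dualCone (secondOrderCone K) ⊆ secondOrderConeDual K := by
  intro q hq
  rcases K.eq_zero_or_pos with rfl | hK
  · simp [mem_secondOrderConeDual_iff]
  have hK : (1 : ℝ) ≤ K := by exact_mod_cast hK
  have hK0 : (0 : ℝ) < K := by linarith
  set s := ∑ i, q i
  set Q := ∑ i, q i ^ 2
  have hs : 0 ≤ s := by
    have he : (fun _ => (1 : ℝ)) ∈ secondOrderCone K := by
      rw [mem_secondOrderCone_iff]
      simp only [Finset.sum_const, Finset.card_univ, Fintype.card_fin, nsmul_eq_mul, mul_one,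
        Nat.cast_nonneg, one_pow, true_and]
      nlinarith
    simpa [s] using hq _ he
  -- Pair `q` with `λ e - q`, where `λ = s / K + μ` is the least value putting it in the cone.
  set D := Q - s ^ 2 / K
  set μ := √((K - 1) * D / K)
  set lam := s / K + μ
  have hμ : μ ^ 2 = max ((K - 1) * D / K) 0 := Real.sq_sqrt'
  have hsum : ∑ i, (lam - q i) = K * μ := by
    simp only [Finset.sum_sub_distrib, Finset.sum_const, Finset.card_univ, Fintype.card_fin,
      nsmul_eq_mul, lam, s]
    field_simp
    ring
  have hsq : ∑ i, (lam - q i) ^ 2 = K * μ ^ 2 + D := by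
    simp only [sub_sq, Finset.sum_add_distrib, Finset.sum_sub_distrib, ← Finset.mul_sum,
      Finset.sum_const, Finset.card_univ, Fintype.card_fin, nsmul_eq_mul, lam, s, D, Q]
    field_simp
    ring
  have hpair : ∑ i, (lam - q i) * q i = μ * s - D := by
    simp only [sub_mul, Finset.sum_sub_distrib, ← Finset.mul_sum, ← sq, lam, s, D, Q]
    field_simp
    ring
  have hmem : (fun i => lam - q i) ∈ secondOrderCone K := by
    rw [mem_secondOrderCone_iff, hsum, hsq]
    refine ⟨by positivity, ?_⟩
    nlinarith [le_max_left ((K - 1) * D / K) 0, mul_div_cancel₀ ((K - 1) * D) hK0.ne']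
  have hD : D ≤ μ * s := by linarith [hq _ hmem]
  refine mem_secondOrderConeDual_iff.2 ⟨hs, ?_⟩
  suffices D ≤ (K - 1) * s ^ 2 / K by
    simp only [D] at this
    field_simp at this
    nlinarith
  by_contra! hlt
  have hD0 : 0 < D := lt_of_le_of_lt (by positivity) hlt
  have hμ' : μ ^ 2 = (K - 1) * D / K := by
    rw [hμ, max_eq_left (div_nonneg (mul_nonneg (by linarith) hD0.le) hK0.le)]
  have : D ^ 2 ≤ μ ^ 2 * s ^ 2 := by rw [← mul_pow]; exact pow_le_pow_left₀ hD0.le hD 2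
  rw [hμ', show (K - 1) * D / K * s ^ 2 = D * ((K - 1) * s ^ 2 / K) by ring] at this
  nlinarith [mul_lt_mul_of_pos_left hlt hD0]

theorem mem_frontier_secondOrderConeDual (hK : 2 ≤ K) {q : Fin K → ℝ}
    (hq : √(∑ i, q i ^ 2) = ∑ i, q i) : q ∈ frontier (secondOrderConeDual K) := by
  have hK : (2 : ℝ) ≤ K := by exact_mod_cast hK
  set s := ∑ i, q i
  have hs : 0 ≤ s := hq ▸ Real.sqrt_nonneg _
  have hQ : ∑ i, q i ^ 2 = s ^ 2 := by
    rw [← hq, Real.sq_sqrt (Finset.sum_nonneg fun i _ => sq_nonneg (q i))]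
  have hout : ∀ t : ℝ, 0 < t → (fun i => q i - t) ∉ secondOrderConeDual K := by
    intro t ht
    rw [mem_secondOrderConeDual_iff, not_and_or, not_le, not_le]
    have hsum : ∑ i, (q i - t) = s - K * t := by simp [Finset.sum_sub_distrib, s, mul_comm]
    have hsq : ∑ i, (q i - t) ^ 2 = s ^ 2 - 2 * t * s + K * t ^ 2 := by
      simp only [sub_sq, Finset.sum_add_distrib, Finset.sum_sub_distrib, ← Finset.sum_mul,
        ← Finset.mul_sum, hQ, Finset.sum_const, Finset.card_univ, Fintype.card_fin, nsmul_eq_mul, s]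
      ring
    rw [hsum, hsq, or_iff_not_imp_left, not_lt]
    intro h
    have hK1 : (0 : ℝ) < K - 1 := by linarith
    nlinarith [mul_pos (mul_pos hK1 ht) (by nlinarith : 0 < 2 * s - K * t)]
  have hlim : Filter.Tendsto (fun t : ℝ => fun i => q i - t) (nhdsWithin 0 (Set.Ioi 0)) (nhds q) :=
    ((by fun_prop : Continuous fun t : ℝ => fun i => q i - t).tendsto' 0 q (by simp)).mono_left
      nhdsWithin_le_nhds
  rw [frontier_eq_closure_inter_closure]
  exact ⟨subset_closure (show q ∈ secondOrderConeDual K from hq.le),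
    mem_closure_of_tendsto hlim (eventually_nhdsWithin_of_forall hout)⟩

theorem mem_dualCone_coneH_of_mul_nonneg {ι : Type*} {B : Matrix ι (Fin K) ℝ}
    {H : Matrix (Fin K) (Fin N) ℝ} (h : ∀ k n, 0 ≤ (B * H) k n) (k : ι) :
    B k ∈ dualCone (coneH H) := by
  rintro _ ⟨θ, hθ, rfl⟩
  change 0 ≤ H *ᵥ θ ⬝ᵥ B k
  rw [dotProduct_comm, dotProduct_mulVec]
  exact Finset.sum_nonneg fun n _ => mul_nonneg (h k n) (hθ n)

namespace SufficientlyScattered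

variable {H : Matrix (Fin K) (Fin N) ℝ}

theorem dualCone_subset (hH : SufficientlyScattered H) :
    dualCone (coneH H) ⊆ secondOrderConeDual K :=
  fun _ hq => dualCone_secondOrderCone_subset fun x hx => hq x (hH.1 hx)

theorem exists_eq_single_of_mem_dualCone (hH : SufficientlyScattered H) (hK : 2 ≤ K)
    {q : Fin K → ℝ} (hq : q ∈ dualCone (coneH H)) (heq : √(∑ i, q i ^ 2) = ∑ i, q i) :
    ∃ k c, q = Pi.single k c := by
  obtain ⟨k, c, -, rfl⟩ : q ∈ {x | ∃ (k : Fin K) (lam : ℝ), 0 ≤ lam ∧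
      x = fun i => lam * (if i = k then (1 : ℝ) else 0)} :=
    hH.2 ▸ ⟨hq, mem_frontier_secondOrderConeDual hK heq⟩
  exact ⟨k, c, funext fun i => by simp [Pi.single_apply]⟩

end SufficientlyScattered

end Cones

theorem minvol_NMF_identifiability_general {F K N : ℕ}
    (Ws : Matrix (Fin F) (Fin K) ℝ) (Hs : Matrix (Fin K) (Fin N) ℝ)
    (V : Matrix (Fin F) (Fin N) ℝ)
    (hV : V = Ws * Hs)
    (hrank : V.rank = K)
    (hWs_col : ∀ k, ∑ f, Ws f k = 1)
    (hHs_nonneg : ∀ k n, 0 ≤ Hs k n)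
    (hHs_ss : SufficientlyScattered Hs)
    (What : Matrix (Fin F) (Fin K) ℝ) (Hhat : Matrix (Fin K) (Fin N) ℝ)
    (hfeas_eq : V = What * Hhat)
    (hfeas_col : ∀ k, ∑ f, What f k = 1)
    (hfeas_H : ∀ k n, 0 ≤ Hhat k n)
    (hopt : ∀ (W : Matrix (Fin F) (Fin K) ℝ) (H : Matrix (Fin K) (Fin N) ℝ),
      V = W * H → (∀ k, ∑ f, W f k = 1) → (∀ k n, 0 ≤ H k n) →
      Real.log (Whatᵀ * What).det ≤ Real.log (Wᵀ * W).det) :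
    ∃ σ : Equiv.Perm (Fin K),
      (∀ f k, What f k = Ws f (σ k)) ∧ (∀ k n, Hhat k n = Hs (σ k) n) := by
  rw [← Fintype.card_fin K] at hrank
  obtain ⟨hWs_rank, hHs_rank⟩ := rank_eq_card_of_rank_mul_eq_card (hV ▸ hrank)
  obtain ⟨hWhat_rank, -⟩ := rank_eq_card_of_rank_mul_eq_card (hfeas_eq ▸ hrank)
  obtain ⟨B, hWs, hHhat⟩ := exists_eq_mul_of_mul_eq hWhat_rank hHs_rank (hV.symm.trans hfeas_eq)
  have hcol : ∀ i, ∑ k, B k i = 1 := sum_apply_eq_one_of_mul hfeas_col (hWs ▸ hWs_col)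
  have hdual : ∀ k, B k ∈ dualCone (coneH Hs) := mem_dualCone_coneH_of_mul_nonneg (hHhat ▸ hfeas_H)
  have hdet : 1 ≤ |B.det| := by
    refine one_le_abs_det_of_det_gram_le (det_transpose_mul_self_pos hWhat_rank) ?_
    rw [← hWs, ← Real.log_le_log_iff (det_transpose_mul_self_pos hWhat_rank)
      (det_transpose_mul_self_pos hWs_rank)]
    exact hopt Ws Hs hV hWs_col hHs_nonneg
  have hsingle : ∀ k, ∃ j c, B k = Pi.single j c := by
    rcases lt_or_ge K 2 with hK | hK
    · have : Subsingleton (Fin K) := Fin.subsingleton_iff_le_one.2 (by omega)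
      exact fun k => ⟨k, B k k, funext fun i => by rw [Subsingleton.elim i k, Pi.single_eq_same]⟩
    · exact fun k => hHs_ss.exists_eq_single_of_mem_dualCone hK (hdual k) <|
        sqrt_sum_sq_eq_sum_of_one_le_abs_det hcol (fun k => hHs_ss.dualCone_subset (hdual k))
          hdet k
  obtain ⟨σ, rfl⟩ := exists_perm_eq_toMatrix_of_forall_row_eq_single hsingle hcol
  refine ⟨σ, fun f k => ?_, fun k n => ?_⟩
  · simp [hWs, PEquiv.mul_toMatrix_toPEquiv]
  · simp [hHhat, PEquiv.toMatrix_toPEquiv_mul]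

/-- Identifiability of minimum-volume NMF with normalization `Wᵀe = e`:
if `V = W# H#` with `rank(V) = K`, `W# ≥ 0` with unit column sums, `H# ≥ 0`
sufficiently scattered, then any optimal solution `(Ŵ, Ĥ)` of
`min logdet(ŴᵀŴ) s.t. V = ŴĤ, Ŵᵀe = e, Ĥ ≥ 0` equals `(W#Π, ΠᵀH#)`
for some permutation matrix `Π` (expressed as a permutation `σ` of the columns). -/
theorem minvol_NMF_identifiability {F K N : ℕ}
    (Ws : Matrix (Fin F) (Fin K) ℝ) (Hs : Matrix (Fin K) (Fin N) ℝ)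
    (V : Matrix (Fin F) (Fin N) ℝ)
    (hV : V = Ws * Hs)
    (hrank : V.rank = K)
    (hWs_nonneg : ∀ f k, 0 ≤ Ws f k)
    (hWs_col : ∀ k, ∑ f, Ws f k = 1)
    (hHs_nonneg : ∀ k n, 0 ≤ Hs k n)
    (hHs_ss : SufficientlyScattered Hs)
    (What : Matrix (Fin F) (Fin K) ℝ) (Hhat : Matrix (Fin K) (Fin N) ℝ)
    (hfeas_eq : V = What * Hhat)
    (hfeas_col : ∀ k, ∑ f, What f k = 1)
    (hfeas_H : ∀ k n, 0 ≤ Hhat k n)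
    (hopt : ∀ (W : Matrix (Fin F) (Fin K) ℝ) (H : Matrix (Fin K) (Fin N) ℝ),
      V = W * H → (∀ k, ∑ f, W f k = 1) → (∀ k n, 0 ≤ H k n) →
      Real.log (Whatᵀ * What).det ≤ Real.log (Wᵀ * W).det) :
    ∃ σ : Equiv.Perm (Fin K),
      (∀ f k, What f k = Ws f (σ k)) ∧ (∀ k n, Hhat k n = Hs (σ k) n) :=
  minvol_NMF_identifiability_general Ws Hs V hV hrank hWs_col hHs_nonneg hHs_ss What Hhat hfeas_eq
    hfeas_col hfeas_H hopt
end

section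
/- Let Y ∈ ℝ^{K×K} be symmetric, write Y = Y⁺ − Y⁻ with Y⁺ = max(Y, 0) and Y⁻ = max(−Y, 0) taken entrywise, let w̃ ∈ ℝ^K have strictly positive entries, and let Φ(w̃) be the diagonal matrix with diagonal entries Φ(w̃)_{kk} = 2·((Y⁺w̃)_k + (Y⁻w̃)_k)/w̃_k. Define l(w) = wᵀYw and l̄(w | w̃) = l(w̃) + (w − w̃)ᵀ∇l(w̃) + ½(w − w̃)ᵀΦ(w̃)(w − w̃), where ∇l(w̃) = 2Yw̃. Then l̄ is a separable auxiliary function for l at w̃: l̄(w | w̃) ≥ l(w) for all w ∈ ℝ^K_+ and l̄(w̃ | w̃) = l(w̃). -/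
/-!
Write `w = w̃ + d`. Since `Y` is symmetric, `l(w̃ + d) = l(w̃) + dᵀ∇l(w̃) + dᵀYd`, so the claim
reduces to `dᵀYd ≤ ½ dᵀΦ(w̃)d = ∑ᵢⱼ |Yᵢⱼ| w̃ⱼ dᵢ² / w̃ᵢ`, using `Y⁺ + Y⁻ = |Y|`. This follows
entrywise from `2 dᵢ Yᵢⱼ dⱼ ≤ |Yᵢⱼ| (w̃ⱼ dᵢ² / w̃ᵢ + w̃ᵢ dⱼ² / w̃ⱼ)` (AM-GM), after summing and
symmetrizing the right-hand side.
-/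

open Matrix Finset

lemma two_mul_mul_mul_le_abs_mul {a x y u v : ℝ} (hu : 0 < u) (hv : 0 < v) :
    2 * (x * a * y) ≤ |a| * (v * x ^ 2 / u + u * y ^ 2 / v) := by
  have hxay : x * a * y ≤ |a| * (|x| * |y|) := by
    calc x * a * y ≤ |x * a * y| := le_abs_self _
      _ = |a| * (|x| * |y|) := by rw [abs_mul, abs_mul]; ring
  have amgm : 2 * (|x| * |y|) ≤ v * x ^ 2 / u + u * y ^ 2 / v := by
    rw [div_add_div _ _ hu.ne' hv.ne', le_div_iff₀ (by positivity)]
    have hsq : (v * |x| - u * |y|) ^ 2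
        = v * x ^ 2 * v + u * (u * y ^ 2) - 2 * (|x| * |y|) * (u * v) := by
      rw [sub_sq, mul_pow, mul_pow, sq_abs, sq_abs]; ring
    linarith [sq_nonneg (v * |x| - u * |y|)]
  calc 2 * (x * a * y) ≤ |a| * (2 * (|x| * |y|)) := by linarith
    _ ≤ |a| * (v * x ^ 2 / u + u * y ^ 2 / v) := by gcongr

lemma sum_sum_mul_mul_eq_dotProduct_mulVec {ι R : Type*} [Fintype ι] [CommSemiring R]
    (A : Matrix ι ι R) (v : ι → R) :
    ∑ i, ∑ j, v i * A i j * v j = v ⬝ᵥ A *ᵥ v := by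
  simp [dotProduct, mulVec, mul_sum, mul_assoc]

namespace Matrix.IsSymm

variable {ι R : Type*} [Fintype ι]

lemma add_dotProduct_mulVec_add [CommRing R] {A : Matrix ι ι R} (hA : A.IsSymm) (v d : ι → R) :
    (v + d) ⬝ᵥ A *ᵥ (v + d) = v ⬝ᵥ A *ᵥ v + 2 * (d ⬝ᵥ A *ᵥ v) + d ⬝ᵥ A *ᵥ d := by
  have hcross : v ⬝ᵥ A *ᵥ d = d ⬝ᵥ A *ᵥ v := by
    rw [dotProduct_mulVec, ← mulVec_transpose, hA.eq, dotProduct_comm]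
  simp only [mulVec_add, add_dotProduct, dotProduct_add, hcross]
  ring

lemma dotProduct_mulVec_le {Y : Matrix ι ι ℝ} (hY : Y.IsSymm) {w : ι → ℝ}
    (hw : ∀ k, 0 < w k) (d : ι → ℝ) :
    d ⬝ᵥ Y *ᵥ d ≤ ∑ i, d i ^ 2 * (Y.map abs *ᵥ w) i / w i := by
  set S := ∑ i, ∑ j, |Y i j| * (w j * d i ^ 2 / w i)
  have hS : ∑ i, d i ^ 2 * (Y.map abs *ᵥ w) i / w i = S := by
    refine sum_congr rfl fun i _ => ?_
    simp only [mulVec, dotProduct, map_apply, mul_sum, sum_div]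
    exact sum_congr rfl fun j _ => by ring
  have hswap : ∑ i, ∑ j, |Y i j| * (w i * d j ^ 2 / w j) = S := by
    rw [sum_comm]
    exact sum_congr rfl fun i _ => sum_congr rfl fun j _ => by rw [hY.apply i j]
  have hpair : 2 * (d ⬝ᵥ Y *ᵥ d)
      ≤ ∑ i, ∑ j, |Y i j| * (w j * d i ^ 2 / w i + w i * d j ^ 2 / w j) := by
    rw [← sum_sum_mul_mul_eq_dotProduct_mulVec, mul_sum]
    refine sum_le_sum fun i _ => ?_
    rw [mul_sum]
    exact sum_le_sum fun j _ => two_mul_mul_mul_le_abs_mul (hw i) (hw j)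
  simp only [mul_add, sum_add_distrib, hswap] at hpair
  linarith

end Matrix.IsSymm

/-- Separable auxiliary function for the quadratic form `l(w) = wᵀYw` at `w̃ > 0`:
with `Y = Y⁺ − Y⁻` (entrywise positive/negative parts), `Φ(w̃)` the diagonal matrix
with entries `2((Y⁺w̃)_k + (Y⁻w̃)_k)/w̃_k`, and
`l̄(w|w̃) = l(w̃) + (w−w̃)ᵀ∇l(w̃) + ½(w−w̃)ᵀΦ(w̃)(w−w̃)` where `∇l(w̃) = 2Yw̃`,
we have `l̄(w|w̃) ≥ l(w)` for all `w ∈ ℝ₊^K` and `l̄(w̃|w̃) = l(w̃)`. -/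
theorem quadratic_separable_auxiliary {K : ℕ}
    (Y Yp Ym : Matrix (Fin K) (Fin K) ℝ) (hY : Y.IsSymm)
    (hYp : ∀ i j, Yp i j = max (Y i j) 0)
    (hYm : ∀ i j, Ym i j = max (-(Y i j)) 0)
    (wt : Fin K → ℝ) (hwt : ∀ k, 0 < wt k)
    (Φ : Matrix (Fin K) (Fin K) ℝ)
    (hΦ : Φ = Matrix.diagonal fun k => 2 * ((Yp.mulVec wt k + Ym.mulVec wt k) / wt k))
    (l lbar : (Fin K → ℝ) → ℝ)
    (hl : ∀ w, l w = ∑ i, ∑ j, w i * Y i j * w j)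
    (hlbar : ∀ w, lbar w =
      l wt + (∑ k, (w k - wt k) * (2 * Y.mulVec wt k))
        + (1 / 2) * ∑ i, ∑ j, (w i - wt i) * Φ i j * (w j - wt j)) :
    (∀ w : Fin K → ℝ, (∀ k, 0 ≤ w k) → l w ≤ lbar w) ∧ lbar wt = l wt := by
  have habs : Yp + Ym = Y.map abs := by
    ext i j
    simp [hYp, hYm, max_zero_add_max_neg_zero_eq_abs_self]
  refine ⟨fun w _ => ?_, by simp [hlbar]⟩
  obtain ⟨d, rfl⟩ : ∃ d, w = wt + d := ⟨w - wt, by abel⟩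
  have hgrad : ∑ k, ((wt + d) k - wt k) * (2 * (Y *ᵥ wt) k) = 2 * (d ⬝ᵥ Y *ᵥ wt) := by
    simp [dotProduct, mul_sum, mul_left_comm]
  have hcurv : (1 / 2 : ℝ) * ∑ i, ∑ j, ((wt + d) i - wt i) * Φ i j * ((wt + d) j - wt j)
      = ∑ i, d i ^ 2 * (Y.map abs *ᵥ wt) i / wt i := by
    simp only [Pi.add_apply, add_sub_cancel_left, sum_sum_mul_mul_eq_dotProduct_mulVec, hΦ,
      ← habs, add_mulVec, dotProduct, mulVec_diagonal, mul_sum]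
    exact sum_congr rfl fun i _ => by ring
  rw [hlbar, hgrad, hcurv, hl, hl, sum_sum_mul_mul_eq_dotProduct_mulVec,
    sum_sum_mul_mul_eq_dotProduct_mulVec, hY.add_dotProduct_mulVec_add]
  linarith [hY.dotProduct_mulVec_le hwt d]
end

section
/- Let Y ∈ ℝ^{K×K} be symmetric, write Y = Y⁺ − Y⁻ with Y⁺ = max(Y, 0) and Y⁻ = max(−Y, 0) taken entrywise, let w̃ ∈ ℝ^K have strictly positive entries, and let Φ(w̃) be the diagonal matrix with diagonal entries Φ(w̃)_{kk} = 2·((Y⁺w̃)_k + (Y⁻w̃)_k)/w̃_k. Then the matrix Φ(w̃) − 2Y is positive semidefinite. Equivalently, the symmetric matrix M with entries M_{ij} = w̃_i·(Φ(w̃) − 2Y)_{ij}·w̃_j has nonnegative diagonal entries and is diagonally dominant (|M_{ii}| ≥ Σ_{j≠i}|M_{ij}| for all i), hence positive semidefinite. -/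
/-
After rescaling by the positive weights, `M = D (Φ(w̃) - 2Y) D` with `D = diag w̃` has
off-diagonal entries `-2 w̃ᵢ Yᵢⱼ w̃ⱼ` and diagonal entries `2 w̃ᵢ (|Y| w̃)ᵢ - 2 Yᵢᵢ w̃ᵢ²`, since
`Y⁺ + Y⁻ = |Y|`. Row `i` therefore exceeds its off-diagonal absolute sum by
`2 w̃ᵢ² (|Yᵢᵢ| - Yᵢᵢ) ≥ 0`. By Gershgorin every eigenvalue of the symmetric matrix `M` lies in a
disc centred at some `Mₖₖ` of radius at most `Mₖₖ`, so `M` is positive semidefinite, and so is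
its congruent `Φ(w̃) - 2Y = D⁻¹ M D⁻¹`.
-/

open Matrix Finset
open scoped ComplexOrder

theorem Matrix.IsHermitian.posSemidef_of_sum_erase_norm_le_re {n 𝕜 : Type*} [Fintype n]
    [DecidableEq n] [RCLike 𝕜] {A : Matrix n n 𝕜} (hA : A.IsHermitian)
    (hdd : ∀ i, ∑ j ∈ univ.erase i, ‖A i j‖ ≤ RCLike.re (A i i)) :
    A.PosSemidef := by
  refine hA.posSemidef_iff_eigenvalues_nonneg.mpr fun i => ?_
  have hμ : Module.End.HasEigenvalue (toLin' A) (hA.eigenvalues i : 𝕜) := by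
    rw [Module.End.hasEigenvalue_iff_mem_spectrum, spectrum_toLin']
    exact (spectrum.algebraMap_mem_iff 𝕜).mpr (hA.eigenvalues_mem_spectrum_real i)
  obtain ⟨k, hk⟩ := eigenvalue_mem_ball hμ
  rw [Metric.mem_closedBall, dist_comm, dist_eq_norm] at hk
  rw [Pi.zero_apply]
  have hre := RCLike.re_le_norm (A k k - hA.eigenvalues i)
  simp only [map_sub, RCLike.ofReal_re] at hre
  linarith [hdd k]

section Phi

variable {n : Type*} [Fintype n] [DecidableEq n]

/-- The matrix `Φ(w̃)` of the statement, written with `Y⁺ + Y⁻ = |Y|` entrywise. -/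
noncomputable def phi (Y : Matrix n n ℝ) (w : n → ℝ) : Matrix n n ℝ :=
  diagonal fun k => 2 * ((Y.map abs *ᵥ w) k / w k)

variable {Y : Matrix n n ℝ} {w : n → ℝ}

theorem abs_weighted_phi_sub_apply_of_ne (hw : ∀ k, 0 ≤ w k) {i j : n} (hij : i ≠ j) :
    |w i * (phi Y w - (2 : ℝ) • Y) i j * w j| = 2 * w i * (|Y i j| * w j) := by
  simp only [phi, Matrix.sub_apply, diagonal_apply_ne _ hij, Matrix.smul_apply, smul_eq_mul,
    zero_sub, abs_mul, abs_neg, abs_two, abs_of_nonneg (hw i), abs_of_nonneg (hw j)]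
  ring

theorem weighted_phi_sub_apply_self {i : n} (hi : w i ≠ 0) :
    w i * (phi Y w - (2 : ℝ) • Y) i i * w i =
      2 * w i * ((Y.map abs *ᵥ w) i - Y i i * w i) := by
  simp only [phi, Matrix.sub_apply, diagonal_apply_eq, Matrix.smul_apply, smul_eq_mul]
  field_simp

theorem sum_erase_abs_weighted_phi_sub_le (hw : ∀ k, 0 < w k) (i : n) :
    ∑ j ∈ univ.erase i, |w i * (phi Y w - (2 : ℝ) • Y) i j * w j| ≤
      w i * (phi Y w - (2 : ℝ) • Y) i i * w i := by
  rw [sum_congr rfl fun j hj => abs_weighted_phi_sub_apply_of_ne (fun k => (hw k).le)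
      (ne_of_mem_erase hj).symm, ← mul_sum, weighted_phi_sub_apply_self (hw i).ne']
  have hrow : (Y.map abs *ᵥ w) i = |Y i i| * w i + ∑ j ∈ univ.erase i, |Y i j| * w j := by
    rw [mulVec, dotProduct, ← add_sum_erase _ _ (mem_univ i)]
    rfl
  have hdiag : Y i i * w i ≤ |Y i i| * w i :=
    mul_le_mul_of_nonneg_right (le_abs_self _) (hw i).le
  exact mul_le_mul_of_nonneg_left (by linarith) (by linarith [hw i])

theorem isHermitian_weighted_phi_sub (hY : Y.IsSymm) :
    (diagonal w * (phi Y w - (2 : ℝ) • Y) * diagonal w).IsHermitian := by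
  have hA : (phi Y w - (2 : ℝ) • Y).IsHermitian :=
    (isHermitian_diagonal _).sub ((isHermitian_iff_isSymm.mpr hY).smul (IsSelfAdjoint.all _))
  simpa using isHermitian_conjTranspose_mul_mul (diagonal w) hA

end Phi

/-- With `Y` symmetric, `Y = Y⁺ − Y⁻` its entrywise positive/negative parts,
`w̃ > 0`, and `Φ(w̃)` the diagonal matrix with entries `2((Y⁺w̃)_k + (Y⁻w̃)_k)/w̃_k`,
the matrix `Φ(w̃) − 2Y` is positive semidefinite. Equivalently, the rescaled matrix
`M_{ij} = w̃_i (Φ(w̃) − 2Y)_{ij} w̃_j` has nonnegative diagonal entries and is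
diagonally dominant, hence positive semidefinite. -/
theorem Phi_minus_2Y_posSemidef {K : ℕ}
    (Y Yp Ym : Matrix (Fin K) (Fin K) ℝ) (hY : Y.IsSymm)
    (hYp : ∀ i j, Yp i j = max (Y i j) 0)
    (hYm : ∀ i j, Ym i j = max (-(Y i j)) 0)
    (wt : Fin K → ℝ) (hwt : ∀ k, 0 < wt k)
    (Φ : Matrix (Fin K) (Fin K) ℝ)
    (hΦ : Φ = Matrix.diagonal fun k => 2 * ((Yp.mulVec wt k + Ym.mulVec wt k) / wt k))
    (M : Matrix (Fin K) (Fin K) ℝ)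
    (hM : ∀ i j, M i j = wt i * (Φ - (2 : ℝ) • Y) i j * wt j) :
    (Φ - (2 : ℝ) • Y).PosSemidef ∧
    (∀ i, 0 ≤ M i i) ∧
    (∀ i, ∑ j ∈ Finset.univ.erase i, |M i j| ≤ |M i i|) ∧
    M.PosSemidef := by
  have hsplit : Yp + Ym = Y.map abs := by
    ext i j
    rw [Matrix.add_apply, map_apply, hYp, hYm]
    exact posPart_add_negPart _
  have hΦ' : Φ = phi Y wt := by
    rw [hΦ, phi, ← hsplit, add_mulVec]
    rfl
  have hMD : M = diagonal wt * (Φ - (2 : ℝ) • Y) * diagonal wt := by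
    ext i j
    rw [hM, mul_diagonal, diagonal_mul]
  have hdd : ∀ i, ∑ j ∈ univ.erase i, |M i j| ≤ M i i := by
    simpa only [hM, hΦ'] using sum_erase_abs_weighted_phi_sub_le hwt
  have hMpsd : M.PosSemidef := by
    refine IsHermitian.posSemidef_of_sum_erase_norm_le_re ?_ (by simpa using hdd)
    rw [hMD, hΦ']
    exact isHermitian_weighted_phi_sub hY
  refine ⟨?_, fun i => hMpsd.diag_nonneg,
    fun i => (abs_of_nonneg hMpsd.diag_nonneg).symm ▸ hdd i, hMpsd⟩
  have hD : IsUnit (diagonal wt) :=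
    isUnit_diagonal.mpr (Pi.isUnit_iff.mpr fun k => (hwt k).ne'.isUnit)
  rw [← hD.posSemidef_star_right_conjugate_iff, star_eq_conjTranspose, diagonal_conjTranspose,
    star_trivial, ← hMD]
  exact hMpsd
end

section
/- (Kullback–Leibler majorization by Jensen's inequality.) Let v ∈ ℝ^N with v_n > 0 for all n, H ∈ ℝ_+^{K×N}, and let w̃ ∈ ℝ^K have strictly positive entries with ṽ = w̃H satisfying ṽ_n > 0 for all n. Define G(w | w̃) = Σ_n Σ_k (w̃_k h_{kn} / ṽ_n) · d_KL(v_n | ṽ_n w_k / w̃_k) for w ∈ ℝ^K with positive entries. Then G(w | w̃) ≥ Σ_n d_KL(v_n | (wH)_n) for all such w, with equality when w = w̃; that is, G is an auxiliary function at w̃ for the row-wise KL-divergence objective w ↦ Σ_n d_KL(v_n | (wH)_n). -/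
/-!
For fixed `x ≥ 0`, `y ↦ d_KL(x | y) = x log x - x - x log y + y` is convex on `(0, ∞)`.
The `n`-th entry of `wH` is the convex combination of the points `ṽ_n w_k / w̃_k` with
weights `w̃_k h_{kn} / ṽ_n`, so Jensen's inequality bounds each column term by the
corresponding inner sum of `G`; at `w = w̃` all these points coincide with `ṽ_n`.
-/

noncomputable def dKL (x y : ℝ) : ℝ := x * Real.log (x / y) - x + y

open Finset Set Real

lemma mul_log_div_eq {x y : ℝ} (hx : 0 ≤ x) (hy : 0 < y) :
    x * log (x / y) = x * log x - x * log y := by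
  rcases hx.eq_or_lt with rfl | hx
  · simp
  · rw [log_div hx.ne' hy.ne', mul_sub]

lemma convexOn_dKL {x : ℝ} (hx : 0 ≤ x) : ConvexOn ℝ (Ioi 0) (dKL x) := by
  have h : ConvexOn ℝ (Ioi 0) fun y => (x * log x - x) + (x • -log y + y) :=
    (convexOn_const _ (convex_Ioi 0)).add
      ((strictConcaveOn_log_Ioi.concaveOn.neg.smul hx).add (convexOn_id (convex_Ioi 0)))
  refine h.congr fun y hy => ?_
  simp only [dKL, mul_log_div_eq hx (mem_Ioi.mp hy), smul_eq_mul]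
  ring

lemma dKL_sum_mul_le_sum_mul_dKL {ι : Type*} (s : Finset ι) {x : ℝ} (hx : 0 ≤ x)
    {h w wt : ι → ℝ} (hh : ∀ i ∈ s, 0 ≤ h i) (hw : ∀ i ∈ s, 0 < w i) (hwt : ∀ i ∈ s, 0 < wt i)
    (hs : 0 < ∑ i ∈ s, wt i * h i) :
    dKL x (∑ i ∈ s, w i * h i) ≤
      ∑ i ∈ s, wt i * h i / (∑ j ∈ s, wt j * h j) *
        dKL x ((∑ j ∈ s, wt j * h j) * w i / wt i) := by
  set t := ∑ j ∈ s, wt j * h j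
  have hweights : ∑ i ∈ s, wt i * h i / t = 1 := by rw [← sum_div, div_self hs.ne']
  have hmix : ∀ i ∈ s, wt i * h i / t * (t * w i / wt i) = w i * h i := fun i hi => by
    field_simp [(hwt i hi).ne', hs.ne']
  have jensen := (convexOn_dKL hx).map_sum_le (t := s)
    (fun i hi => div_nonneg (mul_nonneg (hwt i hi).le (hh i hi)) hs.le) hweights
    (fun i hi => div_pos (mul_pos hs (hw i hi)) (hwt i hi))
  simpa only [smul_eq_mul, sum_congr rfl hmix] using jensen

lemma sum_mul_dKL_self {ι : Type*} (s : Finset ι) (x : ℝ) {h wt : ι → ℝ}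
    (hwt : ∀ i ∈ s, 0 < wt i) (hs : 0 < ∑ i ∈ s, wt i * h i) :
    ∑ i ∈ s, wt i * h i / (∑ j ∈ s, wt j * h j) *
        dKL x ((∑ j ∈ s, wt j * h j) * wt i / wt i) = dKL x (∑ i ∈ s, wt i * h i) := by
  rw [sum_congr rfl fun i hi => by rw [mul_div_cancel_right₀ _ (hwt i hi).ne'], ← sum_mul,
    ← sum_div, div_self hs.ne', one_mul]

/-- Jensen majorization of the row-wise KL objective: with `v > 0`, `H ≥ 0`,
`w̃ > 0` and `ṽ = w̃H > 0`, the function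
`G(w|w̃) = Σ_n Σ_k (w̃_k h_{kn}/ṽ_n) d_KL(v_n | ṽ_n w_k/w̃_k)` satisfies
`G(w|w̃) ≥ Σ_n d_KL(v_n | (wH)_n)` for all `w > 0`, with equality at `w = w̃`. -/
theorem KL_jensen_auxiliary {K N : ℕ}
    (v : Fin N → ℝ) (hv : ∀ n, 0 < v n)
    (H : Matrix (Fin K) (Fin N) ℝ) (hH : ∀ k n, 0 ≤ H k n)
    (wt : Fin K → ℝ) (hwt : ∀ k, 0 < wt k)
    (vt : Fin N → ℝ) (hvt : ∀ n, vt n = ∑ k, wt k * H k n)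
    (hvtpos : ∀ n, 0 < vt n)
    (G : (Fin K → ℝ) → ℝ)
    (hG : ∀ w, G w = ∑ n, ∑ k, (wt k * H k n / vt n) * dKL (v n) (vt n * w k / wt k)) :
    (∀ w : Fin K → ℝ, (∀ k, 0 < w k) →
      (∑ n, dKL (v n) (∑ k, w k * H k n)) ≤ G w) ∧
    G wt = ∑ n, dKL (v n) (∑ k, wt k * H k n) := by
  obtain rfl : vt = fun n => ∑ k, wt k * H k n := funext hvt
  refine ⟨fun w hw => ?_, ?_⟩
  · rw [hG w]
    exact sum_le_sum fun n _ => dKL_sum_mul_le_sum_mul_dKL _ (hv n).le (fun k _ => hH k n)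
      (fun k _ => hw k) (fun k _ => hwt k) (hvtpos n)
  · rw [hG wt]
    exact sum_congr rfl fun n _ => sum_mul_dKL_self _ _ (fun k _ => hwt k) (hvtpos n)
end

section
/- Let A ∈ ℝ^{K×K} satisfy eᵀA = eᵀ (A is column stochastic, i.e., each column sums to one) and suppose every row a_j of A satisfies ‖a_j‖₂ ≤ a_jᵀe. Then |det(A)| ≤ 1. (The proof combines the Hadamard inequality |det(A)| ≤ Π_j ‖a_j‖₂, the hypothesis ‖a_j‖₂ ≤ a_jᵀe, and the arithmetic–geometric mean inequality Π_j (a_jᵀe) ≤ ((Σ_j a_jᵀe)/K)^K = (eᵀAe/K)^K = 1.) -/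
/-!
Hadamard's inequality bounds `|det A|` by the product of the Euclidean norms of the rows, the
hypothesis bounds each norm by the row sum, and by AM-GM the product of the (nonnegative) row sums
is at most `(total / K) ^ K`; column stochasticity makes the total equal to `K`.
-/

open Matrix Finset

-- Supplies the instance `Fact (finrank ℝ (EuclideanSpace ℝ (Fin n)) = n)` that `volumeForm` needs.
open scoped EuclideanSpace in
theorem Matrix.abs_det_le_prod_sqrt_sum_sq_fin {n : ℕ} (A : Matrix (Fin n) (Fin n) ℝ) :
    |A.det| ≤ ∏ i, √(∑ j, A i j ^ 2) := by
  let b := EuclideanSpace.basisFun (Fin n) ℝ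
  let v : Fin n → EuclideanSpace ℝ (Fin n) := fun i => WithLp.toLp 2 (A i)
  have hdet : b.toBasis.det v = A.det := by
    rw [Module.Basis.det_apply, ← det_transpose]
    rfl
  calc |A.det| = |b.toBasis.orientation.volumeForm v| := by
        rw [Orientation.volumeForm_robust' _ b, hdet]
    _ ≤ ∏ i, ‖v i‖ := Orientation.abs_volumeForm_apply_le _ _
    _ = ∏ i, √(∑ j, A i j ^ 2) := by simp [v, EuclideanSpace.norm_eq]

theorem Matrix.abs_det_le_prod_sqrt_sum_sq_s11 {ι : Type*} [Fintype ι] [DecidableEq ι]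
    (A : Matrix ι ι ℝ) : |A.det| ≤ ∏ i, √(∑ j, A i j ^ 2) := by
  let e := Fintype.equivFin ι
  have h := (reindex e e A).abs_det_le_prod_sqrt_sum_sq_fin
  rw [det_reindex_self] at h
  refine h.trans_eq ?_
  rw [← e.prod_comp]
  simp only [reindex_apply, submatrix_apply, Equiv.symm_apply_apply]
  exact prod_congr rfl fun i _ => congrArg _ (e.symm.sum_comp fun j => A i j ^ 2)

theorem Real.prod_le_arith_mean_pow {ι : Type*} (s : Finset ι) (z : ι → ℝ)
    (hz : ∀ i ∈ s, 0 ≤ z i) : ∏ i ∈ s, z i ≤ ((∑ i ∈ s, z i) / #s) ^ #s := by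
  rcases s.eq_empty_or_nonempty with rfl | hs
  · simp
  have hcard : #s ≠ 0 := hs.card_pos.ne'
  have hamgm := Real.geom_mean_le_arith_mean_weighted s (fun _ => (#s : ℝ)⁻¹) z
    (fun _ _ => by positivity) (by simp [hcard]) hz
  rw [← mul_sum, inv_mul_eq_div] at hamgm
  calc ∏ i ∈ s, z i = (∏ i ∈ s, z i ^ (#s : ℝ)⁻¹) ^ #s := by
        rw [← prod_pow]
        exact prod_congr rfl fun i hi => (Real.rpow_inv_natCast_pow (hz i hi) hcard).symm
    _ ≤ _ := pow_le_pow_left₀ (prod_nonneg fun i hi => Real.rpow_nonneg (hz i hi) _) hamgm _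

/-- If `A ∈ ℝ^{K×K}` is column stochastic (`eᵀA = eᵀ`, i.e. each column sums to one)
and every row `a_j` of `A` satisfies `‖a_j‖₂ ≤ a_jᵀe`, then `|det(A)| ≤ 1`. -/
theorem abs_det_le_one_of_column_stochastic {K : ℕ}
    (A : Matrix (Fin K) (Fin K) ℝ)
    (hcol : ∀ j, ∑ i, A i j = 1)
    (hrow : ∀ j, Real.sqrt (∑ i, (A j i) ^ 2) ≤ ∑ i, A j i) :
    |A.det| ≤ 1 := by
  have hrowSum_nonneg : ∀ j, 0 ≤ ∑ i, A j i := fun j => (Real.sqrt_nonneg _).trans (hrow j)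
  have htotal : ∑ j, ∑ i, A j i = K := sum_comm.trans (by simp [hcol])
  calc |A.det| ≤ ∏ j, √(∑ i, A j i ^ 2) := A.abs_det_le_prod_sqrt_sum_sq_s11
    _ ≤ ∏ j, ∑ i, A j i := prod_le_prod (fun j _ => Real.sqrt_nonneg _) fun j _ => hrow j
    _ ≤ ((∑ j, ∑ i, A j i) / K) ^ K := by
      simpa using Real.prod_le_arith_mean_pow univ _ fun j _ => hrowSum_nonneg j
    _ = 1 := by
      rw [htotal]
      rcases eq_or_ne K 0 with rfl | hK
      · simp
      · simp [hK]
end
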